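/- Let F : [0,∞)^d → ℝ be bounded and continuous. Then for every L > 0, the Szász–Mirakyan smoothing converges uniformly on [0,L]^d: sup_{x ∈ [0,L]^d} |F_m(x) − F(x)| → 0 as m_min → ∞; precisely, for every ε > 0 there exists M such that for all m = (m_1,…,m_d) with m_min ≥ M, sup_{x ∈ [0,L]^d} |F_m(x) − F(x)| ≤ ε. -/

import Mathlib

open MeasureTheory ProbabilityTheory Filter Real

/-- Partial derivative `∂_{x_j} F(x)`. -/
noncomputable def pd {d : ℕ} (F : (Fin d → ℝ) → ℝ) (j : Fin d) (x : Fin d → ℝ) : ℝ :=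
  deriv (fun t => F (Function.update x j t)) (x j)

/-- Second partial derivative `∂²_{x_i x_j} F(x)`. -/
noncomputable def pd2 {d : ℕ} (F : (Fin d → ℝ) → ℝ) (i j : Fin d) (x : Fin d → ℝ) : ℝ :=
  pd (pd F j) i x

/-- Product-Poisson weights `P_{k,m}(x) = ∏_j e^{-m_j x_j} (m_j x_j)^{k_j} / k_j!`. -/
noncomputable def poissonWeight {d : ℕ} (m : Fin d → ℕ) (k : Fin d → ℕ) (x : Fin d → ℝ) : ℝ :=
  ∏ j, Real.exp (-(m j * x j)) * (m j * x j) ^ (k j) / Nat.factorial (k j)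

/-- Szász–Mirakyan smoothing `F_m(x) = Σ_k F(k/m) P_{k,m}(x)`. -/
noncomputable def szasz {d : ℕ} (F : (Fin d → ℝ) → ℝ) (m : Fin d → ℕ) (x : Fin d → ℝ) : ℝ :=
  ∑' k : Fin d → ℕ, F (fun j => (k j : ℝ) / (m j : ℝ)) * poissonWeight m k x

/-- The open positive orthant `(0,∞)^d`. -/
def posOrthant (d : ℕ) : Set (Fin d → ℝ) := {x | ∀ j, 0 < x j}

/-- ℓ¹-neighbourhood of `S` inside the positive orthant. -/
def l1Nbhd {d : ℕ} (S : Set (Fin d → ℝ)) (δ : ℝ) : Set (Fin d → ℝ) :=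
  {y | (∀ j, 0 < y j) ∧ ∃ z ∈ S, ∑ j, |y j - z j| ≤ δ}

/-- Assumption (A1): `F` is C² on `(0,∞)^d`, with first and second partial derivatives
bounded on an ℓ¹-neighbourhood of each compact `S ⊂ (0,∞)^d`. -/
def A1 {d : ℕ} (F : (Fin d → ℝ) → ℝ) : Prop :=
  ContDiffOn ℝ 2 F (posOrthant d) ∧
  ∀ S : Set (Fin d → ℝ), IsCompact S → S ⊆ posOrthant d →
    ∃ δ > 0, ∃ M : ℝ, ∀ y ∈ l1Nbhd S δ,
      (∀ i, |pd F i y| ≤ M) ∧ (∀ i j, |pd2 F i j y| ≤ M)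

/-- `m_min = min_j m_j`. -/
noncomputable def mmin {d : ℕ} (m : Fin d → ℕ) : ℕ := ⨅ j, m j

/-!
`F_m(x)` is the expectation of `F(K/m)` for independent `K_j ~ Poisson(m_j x_j)`,
and `K_j/m_j` has mean `x_j` and variance `x_j/m_j`. Uniform continuity of `F` on the compact box
`[0, L+1]^d` controls `|F(K/m) - F(x)|` when every `|K_j/m_j - x_j| < δ`; otherwise, with
`|F| ≤ C`, `|F(K/m) - F(x)| ≤ 2C ≤ (2C/δ²) ∑_j (K_j/m_j - x_j)²`. Taking expectations gives
`|F_m(x) - F(x)| ≤ ε/2 + (2C/δ²) ∑_j x_j/m_j ≤ ε/2 + 2CdL/(δ² m_min)`.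
-/

theorem hasSum_pow_div_factorial (r : ℝ) : HasSum (fun n => r ^ n / n.factorial) (exp r) := by
  simpa only [Real.exp_eq_exp_ℝ] using NormedSpace.expSeries_div_hasSum_exp r

theorem hasSum_descFactorial_mul_pow_div_factorial (j : ℕ) (r : ℝ) :
    HasSum (fun n => n.descFactorial j * r ^ n / n.factorial) (r ^ j * exp r) := by
  have hshift : (fun n => ((n + j).descFactorial j : ℝ) * r ^ (n + j) / (n + j).factorial) =
      fun n => r ^ j * (r ^ n / n.factorial) := by
    funext n
    have h := Nat.factorial_mul_descFactorial (Nat.le_add_left j n)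
    rw [Nat.add_sub_cancel] at h
    have hpos : ((n + j).descFactorial j : ℝ) ≠ 0 := by
      exact_mod_cast (Nat.descFactorial_pos.mpr le_add_self).ne'
    rw [← h, Nat.cast_mul, pow_add]
    field_simp
  have hinit : ∑ i ∈ Finset.range j, (i.descFactorial j : ℝ) * r ^ i / i.factorial = 0 :=
    Finset.sum_eq_zero fun i hi => by
      simp [Nat.descFactorial_eq_zero_iff_lt.mpr (Finset.mem_range.mp hi)]
  rw [← hasSum_nat_add_iff' j, hinit, sub_zero, hshift]
  exact (hasSum_pow_div_factorial r).mul_left _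

noncomputable def poissonTerm (r : ℝ) (n : ℕ) : ℝ := exp (-r) * r ^ n / n.factorial

theorem poissonTerm_nonneg {r : ℝ} (hr : 0 ≤ r) (n : ℕ) : 0 ≤ poissonTerm r n := by
  unfold poissonTerm
  positivity

theorem hasSum_descFactorial_mul_poissonTerm (j : ℕ) (r : ℝ) :
    HasSum (fun n => n.descFactorial j * poissonTerm r n) (r ^ j) := by
  have h := (hasSum_descFactorial_mul_pow_div_factorial j r).mul_left (exp (-r))
  rw [mul_left_comm, ← Real.exp_add, neg_add_cancel, Real.exp_zero, mul_one] at h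
  exact h.congr_fun fun n => by unfold poissonTerm; ring

theorem hasSum_poissonTerm (r : ℝ) : HasSum (poissonTerm r) 1 := by
  simpa using hasSum_descFactorial_mul_poissonTerm 0 r

theorem hasSum_sq_sub_mul_poissonTerm (r : ℝ) :
    HasSum (fun n : ℕ => ((n : ℝ) - r) ^ 2 * poissonTerm r n) r := by
  have h := (hasSum_descFactorial_mul_poissonTerm 2 r).add
    (((hasSum_descFactorial_mul_poissonTerm 1 r).mul_left (1 - 2 * r)).add
      ((hasSum_descFactorial_mul_poissonTerm 0 r).mul_left (r ^ 2)))
  rw [show r ^ 2 + ((1 - 2 * r) * r ^ 1 + r ^ 2 * r ^ 0) = r by ring] at h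
  refine h.congr_fun fun n => ?_
  simp only [Nat.cast_descFactorial_two, Nat.descFactorial_one, Nat.descFactorial_zero]
  push_cast
  ring

theorem hasSum_sq_div_sub_mul_poissonTerm {c : ℝ} (hc : c ≠ 0) (x : ℝ) :
    HasSum (fun n : ℕ => ((n : ℝ) / c - x) ^ 2 * poissonTerm (c * x) n) (x / c) := by
  have h := (hasSum_sq_sub_mul_poissonTerm (c * x)).div_const (c ^ 2)
  rw [show c * x / c ^ 2 = x / c by field_simp] at h
  exact h.congr_fun fun n => by field_simp

section ProductSums

variable {α : Type*} {d : ℕ} {f : Fin d → α → ℝ}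

theorem hasSum_pi_prod_of_nonneg {s : Fin d → ℝ} (hf : ∀ i n, 0 ≤ f i n)
    (hs : ∀ i, HasSum (f i) (s i)) :
    HasSum (fun k : Fin d → α => ∏ i, f i (k i)) (∏ i, s i) := by
  induction d with
  | zero => simp
  | succ d ih =>
    have ih := ih (fun i => hf i.succ) (fun i => hs i.succ)
    have hsum := (hs 0).summable.mul_of_nonneg ih.summable (hf 0)
      fun k => Finset.prod_nonneg fun i _ => hf i.succ (k i)
    have hmul := HasSum.mul (hs 0) ih
    rw [← (Fin.consEquiv fun _ => α).hasSum_iff, Fin.prod_univ_succ]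
    refine (hmul hsum).congr_fun fun p => ?_
    simp [Fin.prod_univ_succ, Fin.consEquiv]

/-- The expectation of `g (k j)` under a product of probability distributions on `α` is its
expectation under the `j`-th factor. -/
theorem hasSum_mul_pi_prod_of_nonneg {g : α → ℝ} {t : ℝ} (hf : ∀ i n, 0 ≤ f i n)
    (hg : ∀ n, 0 ≤ g n) (hs : ∀ i, HasSum (f i) 1) (j : Fin d)
    (ht : HasSum (fun n => g n * f j n) t) :
    HasSum (fun k : Fin d → α => g (k j) * ∏ i, f i (k i)) t := by
  classical
  have h := hasSum_pi_prod_of_nonneg (f := fun i n => (if i = j then g n else 1) * f i n)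
    (s := fun i => if i = j then t else 1)
    (fun i n => mul_nonneg (by split_ifs <;> simp [hg]) (hf i n))
    (fun i => by split_ifs with hij <;> [(subst hij; exact ht); simpa using hs i])
  simpa only [Finset.prod_mul_distrib, Finset.prod_ite_eq', Finset.mem_univ, if_true] using h

end ProductSums

theorem abs_sub_le_add_sum_sq {ι : Type*} [Fintype ι] {u x : ι → ℝ} {a b C η δ : ℝ}
    (hδ : 0 < δ) (hη : 0 ≤ η) (ha : |a| ≤ C) (hb : |b| ≤ C)
    (hnear : (∀ j, |u j - x j| < δ) → |a - b| ≤ η) :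
    |a - b| ≤ η + 2 * C / δ ^ 2 * ∑ j, (u j - x j) ^ 2 := by
  have hC : 0 ≤ 2 * C / δ ^ 2 := by have := (abs_nonneg a).trans ha; positivity
  by_cases h : ∀ j, |u j - x j| < δ
  · exact (hnear h).trans (le_add_of_nonneg_right
      (mul_nonneg hC (Finset.sum_nonneg fun j _ => sq_nonneg _)))
  · push Not at h
    obtain ⟨j, hj⟩ := h
    have hfar : δ ^ 2 ≤ ∑ j, (u j - x j) ^ 2 :=
      calc δ ^ 2 ≤ (u j - x j) ^ 2 := (pow_le_pow_left₀ hδ.le hj 2).trans_eq (sq_abs _)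
        _ ≤ ∑ j, (u j - x j) ^ 2 :=
          Finset.single_le_sum (fun j _ => sq_nonneg (u j - x j)) (Finset.mem_univ j)
    calc |a - b| ≤ |a| + |b| := abs_sub _ _
      _ ≤ 2 * C / δ ^ 2 * δ ^ 2 := by field_simp; linarith
      _ ≤ η + 2 * C / δ ^ 2 * ∑ j, (u j - x j) ^ 2 := by nlinarith

theorem exists_forall_abs_sub_le_of_continuousOn {ι : Type*} [Fintype ι] {F : (ι → ℝ) → ℝ}
    (hcont : ContinuousOn F {x | ∀ j, 0 ≤ x j}) (L : ℝ) {η : ℝ} (hη : 0 < η) :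
    ∃ δ > 0, ∀ x u : ι → ℝ, (∀ j, x j ∈ Set.Icc 0 L) → (∀ j, 0 ≤ u j) →
      (∀ j, |u j - x j| < δ) → |F u - F x| ≤ η := by
  set box : Set (ι → ℝ) := Set.univ.pi fun _ => Set.Icc 0 (L + 1)
  have hbox : UniformContinuousOn F box :=
    (isCompact_univ_pi fun _ => isCompact_Icc).uniformContinuousOn_of_continuous
      (hcont.mono fun y hy j => (hy j (Set.mem_univ j)).1)
  obtain ⟨δ, hδ, hF⟩ := Metric.uniformContinuousOn_iff.mp hbox η hη
  refine ⟨min δ 1, lt_min hδ one_pos, fun x u hx hu hux => ?_⟩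
  have hux' : ∀ j, |u j - x j| < 1 := fun j => (hux j).trans_le (min_le_right _ _)
  have hu_box : u ∈ box := fun j _ =>
    ⟨hu j, by linarith [(hx j).2, (abs_lt.mp (hux' j)).2]⟩
  have hx_box : x ∈ box := fun j _ => ⟨(hx j).1, by linarith [(hx j).2]⟩
  have hdist : dist u x < δ := (dist_pi_lt_iff hδ).mpr fun j =>
    (Real.dist_eq _ _ ▸ hux j).trans_le (min_le_left _ _)
  exact (hF u hu_box x hx_box hdist).le

theorem sum_div_le_card_mul_div {ι : Type*} [Fintype ι] {x m : ι → ℝ} {L M : ℝ} (hL : 0 ≤ L)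
    (hM : 0 < M) (hx : ∀ j, x j ≤ L) (hm : ∀ j, M ≤ m j) :
    ∑ j, x j / m j ≤ Fintype.card ι * L / M :=
  calc ∑ j, x j / m j ≤ ∑ _j : ι, L / M :=
        Finset.sum_le_sum fun j _ => div_le_div₀ hL (hx j) hM (hm j)
    _ = Fintype.card ι * L / M := by simp [mul_div_assoc]

section Szasz

variable {d : ℕ} {m : Fin d → ℕ} {x : Fin d → ℝ}

theorem poissonWeight_eq_prod (m k : Fin d → ℕ) (x : Fin d → ℝ) :
    poissonWeight m k x = ∏ j, poissonTerm (m j * x j) (k j) :=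
  rfl

theorem poissonWeight_nonneg (hx : ∀ j, 0 ≤ x j) (k : Fin d → ℕ) : 0 ≤ poissonWeight m k x :=
  Finset.prod_nonneg fun j _ => poissonTerm_nonneg (mul_nonneg (m j).cast_nonneg (hx j)) (k j)

theorem hasSum_poissonWeight (hx : ∀ j, 0 ≤ x j) :
    HasSum (fun k => poissonWeight m k x) 1 := by
  simpa [poissonWeight_eq_prod] using hasSum_pi_prod_of_nonneg
    (fun j n => poissonTerm_nonneg (mul_nonneg (m j).cast_nonneg (hx j)) n)
    (fun j => hasSum_poissonTerm (m j * x j))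

theorem hasSum_sq_sub_mul_poissonWeight (hx : ∀ j, 0 ≤ x j) {j : Fin d} (hm : m j ≠ 0) :
    HasSum (fun k => ((k j : ℝ) / m j - x j) ^ 2 * poissonWeight m k x) (x j / m j) :=
  hasSum_mul_pi_prod_of_nonneg (f := fun i => poissonTerm (m i * x i))
    (g := fun n : ℕ => ((n : ℝ) / m j - x j) ^ 2)
    (fun i n => poissonTerm_nonneg (mul_nonneg (m i).cast_nonneg (hx i)) n)
    (fun _ => sq_nonneg _) (fun _ => hasSum_poissonTerm _) j
    (hasSum_sq_div_sub_mul_poissonTerm (Nat.cast_ne_zero.mpr hm) (x j))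

theorem hasSum_szasz_sub {F : (Fin d → ℝ) → ℝ} {C : ℝ}
    (hC : ∀ y : Fin d → ℝ, (∀ j, 0 ≤ y j) → |F y| ≤ C) (hx : ∀ j, 0 ≤ x j) :
    HasSum (fun k => (F (fun j => (k j : ℝ) / m j) - F x) * poissonWeight m k x)
      (szasz F m x - F x) := by
  have hP := hasSum_poissonWeight (m := m) hx
  have hsummable : Summable fun k => F (fun j => (k j : ℝ) / m j) * poissonWeight m k x := by
    refine (hP.summable.mul_left C).of_norm_bounded fun k => ?_
    rw [Real.norm_eq_abs, abs_mul, abs_of_nonneg (poissonWeight_nonneg hx k)]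
    exact mul_le_mul_of_nonneg_right (hC _ fun j => by positivity) (poissonWeight_nonneg hx k)
  have h := hsummable.hasSum.sub (hP.mul_left (F x))
  rw [mul_one] at h
  exact h.congr_fun fun k => sub_mul _ _ _

theorem abs_szasz_sub_le {F : (Fin d → ℝ) → ℝ} {C η δ : ℝ}
    (hC : ∀ y : Fin d → ℝ, (∀ j, 0 ≤ y j) → |F y| ≤ C) (hx : ∀ j, 0 ≤ x j)
    (hm : ∀ j, m j ≠ 0) (hδ : 0 < δ) (hη : 0 ≤ η)
    (hnear : ∀ u : Fin d → ℝ, (∀ j, 0 ≤ u j) → (∀ j, |u j - x j| < δ) → |F u - F x| ≤ η) :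
    |szasz F m x - F x| ≤ η + 2 * C / δ ^ 2 * ∑ j, x j / m j := by
  set node : (Fin d → ℕ) → Fin d → ℝ := fun k j => (k j : ℝ) / m j
  have hnode : ∀ k j, 0 ≤ node k j := fun k j => by positivity
  have hsq := hasSum_sum (s := Finset.univ) fun j _ => hasSum_sq_sub_mul_poissonWeight hx (hm j)
  have hbound := ((hasSum_poissonWeight (m := m) hx).mul_left η).add (hsq.mul_left (2 * C / δ ^ 2))
  rw [mul_one] at hbound
  refine (hasSum_szasz_sub hC hx).norm_le_of_bounded hbound fun k => ?_
  rw [Real.norm_eq_abs, abs_mul, abs_of_nonneg (poissonWeight_nonneg hx k), ← Finset.sum_mul,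
    ← mul_assoc, ← add_mul]
  exact mul_le_mul_of_nonneg_right
    (abs_sub_le_add_sum_sq hδ hη (hC _ (hnode k)) (hC x hx) (hnear _ (hnode k)))
    (poissonWeight_nonneg hx k)

end Szasz

theorem szasz_operator_uniform_convergence_general
    {d : ℕ} (F : (Fin d → ℝ) → ℝ)
    (hbdd : ∃ Cb : ℝ, ∀ x : Fin d → ℝ, (∀ j, 0 ≤ x j) → |F x| ≤ Cb)
    (hcont : ContinuousOn F {x : Fin d → ℝ | ∀ j, 0 ≤ x j}) :
    ∀ L > (0 : ℝ), ∀ ε > 0, ∃ M : ℕ, ∀ m : Fin d → ℕ, (∀ j, 0 < m j) → M ≤ mmin m →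
      ∀ x : Fin d → ℝ, (∀ j, x j ∈ Set.Icc (0:ℝ) L) →
        |szasz F m x - F x| ≤ ε := by
  obtain ⟨C, hC⟩ := hbdd
  intro L hL ε hε
  obtain ⟨δ, hδ, hnear⟩ := exists_forall_abs_sub_le_of_continuousOn hcont L (half_pos hε)
  set c := 2 * C / δ ^ 2
  have hc : 0 ≤ c := div_nonneg (by linarith [(abs_nonneg _).trans (hC 0 fun _ => le_rfl)])
    (by positivity)
  obtain ⟨M, hM⟩ := exists_nat_gt (2 * c * (d * L) / ε)
  refine ⟨M, fun m _ hmM x hx => ?_⟩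
  have hMpos : (0 : ℝ) < M := lt_of_le_of_lt (by positivity) hM
  have hmM : ∀ j, (M : ℝ) ≤ m j := fun j => by
    exact_mod_cast hmM.trans (ciInf_le (OrderBot.bddBelow _) j)
  have hm : ∀ j, m j ≠ 0 := fun j => by exact_mod_cast (hMpos.trans_le (hmM j)).ne'
  have hfar : c * (d * L / M) ≤ ε / 2 := by
    rw [div_lt_iff₀ hε] at hM
    rw [← mul_div_assoc, div_le_iff₀ hMpos]
    linarith
  calc |szasz F m x - F x| ≤ ε / 2 + c * ∑ j, x j / m j :=
        abs_szasz_sub_le hC (fun j => (hx j).1) hm hδ (half_pos hε).le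
          fun u hu hux => hnear x u hx hu hux
    _ ≤ ε / 2 + c * (d * L / M) := by
        gcongr
        simpa using sum_div_le_card_mul_div hL.le hMpos (fun j => (hx j).2) hmM
    _ ≤ ε := by linarith

/-- Uniform convergence of the multivariate Szász–Mirakyan operator on `[0,L]^d`
for bounded continuous functions on `[0,∞)^d`. -/
theorem szasz_operator_uniform_convergence
    {d : ℕ} (hd : 0 < d) (F : (Fin d → ℝ) → ℝ)
    (hbdd : ∃ Cb : ℝ, ∀ x : Fin d → ℝ, (∀ j, 0 ≤ x j) → |F x| ≤ Cb)
    (hcont : ContinuousOn F {x : Fin d → ℝ | ∀ j, 0 ≤ x j}) :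
    ∀ L > (0 : ℝ), ∀ ε > 0, ∃ M : ℕ, ∀ m : Fin d → ℕ, (∀ j, 0 < m j) → M ≤ mmin m →
      ∀ x : Fin d → ℝ, (∀ j, x j ∈ Set.Icc (0:ℝ) L) →
        |szasz F m x - F x| ≤ ε :=
  szasz_operator_uniform_convergence_general F hbdd hcont
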